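/- Let F be a 4×4 real matrix with Fᵀ = −F, and set s = F₁₂² + F₁₃² + F₁₄² + F₂₃² + F₂₄² + F₃₄² and P = F₁₂F₃₄ − F₁₃F₂₄ + F₁₄F₂₃. Then: (i) det(1 − F) = 1 + s if and only if P = 0; and (ii) det(1 − F) = (1 + s/2)² if and only if (F₃₄, −F₂₄, F₂₃) = (F₁₂, F₁₃, F₁₄) or (F₃₄, −F₂₄, F₂₃) = −(F₁₂, F₁₃, F₁₄). -/

import Mathlib

/-!
For antisymmetric `F`, expanding the determinant gives `det (1 - F) = 1 + s + P²`, where `s` is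
the sum of the squares of the upper entries and `P` the Pfaffian; this settles (i). For (ii),
`(1 + s/2)² - det (1 - F) = (s - 2P)(s + 2P)/4`, and `s ∓ 2P` are sums of three squares
(half the squared norm of the anti-self-dual, resp. self-dual, part of `F`), which vanish exactly
when `F` is self-dual, resp. anti-self-dual.
-/

open Matrix

theorem eq_of_transpose_eq_neg_fin_four {R : Type*} [AddGroup R] [IsAddTorsionFree R]
    {F : Matrix (Fin 4) (Fin 4) R} (hF : Fᵀ = -F) :
    F = !![0, F 0 1, F 0 2, F 0 3; -F 0 1, 0, F 1 2, F 1 3;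
      -F 0 2, -F 1 2, 0, F 2 3; -F 0 3, -F 1 3, -F 2 3, 0] := by
  have skew : ∀ i j, F j i = -F i j := fun i j => congr_fun₂ hF i j
  ext i j
  fin_cases i <;> fin_cases j <;> simp <;>
    first | exact self_eq_neg.mp (skew _ _) | exact skew _ _

theorem det_one_sub_skew_fin_four {R : Type*} [CommRing R] (a b c d e f : R) :
    (1 - !![0, a, b, c; -a, 0, d, e; -b, -d, 0, f; -c, -e, -f, 0]).det =
      1 + (a ^ 2 + b ^ 2 + c ^ 2 + d ^ 2 + e ^ 2 + f ^ 2) + (a * f - b * e + c * d) ^ 2 := by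
  rw [det_succ_row_zero]
  simp [Fin.sum_univ_succ, det_fin_three, Fin.succAbove, one_apply]
  ring

theorem det_one_sub_of_transpose_eq_neg_fin_four {R : Type*} [CommRing R] [IsAddTorsionFree R]
    {F : Matrix (Fin 4) (Fin 4) R} (hF : Fᵀ = -F) :
    (1 - F).det = 1 + (F 0 1 ^ 2 + F 0 2 ^ 2 + F 0 3 ^ 2 + F 1 2 ^ 2 + F 1 3 ^ 2 + F 2 3 ^ 2) +
      (F 0 1 * F 2 3 - F 0 2 * F 1 3 + F 0 3 * F 1 2) ^ 2 := by
  rw [← det_one_sub_skew_fin_four, ← eq_of_transpose_eq_neg_fin_four hF]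

section OrderedRing

variable {R : Type*} [CommRing R] [LinearOrder R] [IsStrictOrderedRing R]

theorem sq_add_sq_add_sq_eq_zero_iff {x y z : R} :
    x ^ 2 + y ^ 2 + z ^ 2 = 0 ↔ x = 0 ∧ y = 0 ∧ z = 0 := by
  rw [add_eq_zero_iff_of_nonneg (by positivity) (by positivity),
    add_eq_zero_iff_of_nonneg (by positivity) (by positivity)]
  simp [and_assoc]

theorem sum_sq_eq_two_mul_pfaffian_iff (a b c d e f : R) :
    a ^ 2 + b ^ 2 + c ^ 2 + d ^ 2 + e ^ 2 + f ^ 2 = 2 * (a * f - b * e + c * d) ↔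
      (f, -e, d) = (a, b, c) := by
  rw [← sub_eq_zero,
    show a ^ 2 + b ^ 2 + c ^ 2 + d ^ 2 + e ^ 2 + f ^ 2 - 2 * (a * f - b * e + c * d) =
      (f - a) ^ 2 + (-e - b) ^ 2 + (d - c) ^ 2 by ring,
    sq_add_sq_add_sq_eq_zero_iff]
  simp only [sub_eq_zero, Prod.mk.injEq]

theorem sum_sq_eq_neg_two_mul_pfaffian_iff (a b c d e f : R) :
    a ^ 2 + b ^ 2 + c ^ 2 + d ^ 2 + e ^ 2 + f ^ 2 = -(2 * (a * f - b * e + c * d)) ↔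
      (f, -e, d) = -(a, b, c) := by
  rw [← sub_eq_zero, sub_neg_eq_add,
    show a ^ 2 + b ^ 2 + c ^ 2 + d ^ 2 + e ^ 2 + f ^ 2 + 2 * (a * f - b * e + c * d) =
      (f - -a) ^ 2 + (-e - -b) ^ 2 + (d - -c) ^ 2 by ring,
    sq_add_sq_add_sq_eq_zero_iff]
  simp only [sub_eq_zero, Prod.neg_mk, Prod.mk.injEq]

end OrderedRing

theorem one_add_sum_sq_add_sq_pfaffian_eq_sq_iff {R : Type*} [Field R] [LinearOrder R]
    [IsStrictOrderedRing R] (a b c d e f : R) :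
    1 + (a ^ 2 + b ^ 2 + c ^ 2 + d ^ 2 + e ^ 2 + f ^ 2) + (a * f - b * e + c * d) ^ 2 =
        (1 + (a ^ 2 + b ^ 2 + c ^ 2 + d ^ 2 + e ^ 2 + f ^ 2) / 2) ^ 2 ↔
      (f, -e, d) = (a, b, c) ∨ (f, -e, d) = -(a, b, c) := by
  set s := a ^ 2 + b ^ 2 + c ^ 2 + d ^ 2 + e ^ 2 + f ^ 2
  set p := a * f - b * e + c * d
  have sq_eq_sq : 1 + s + p ^ 2 = (1 + s / 2) ^ 2 ↔ s ^ 2 = (2 * p) ^ 2 := by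
    constructor <;> intro h
    · linear_combination -4 * h
    · linear_combination -h / 4
  rw [sq_eq_sq, sq_eq_sq_iff_eq_or_eq_neg, sum_sq_eq_two_mul_pfaffian_iff,
    sum_sq_eq_neg_two_mul_pfaffian_iff]

/-- Equality cases in the Born–Infeld energy bounds: with `s = |F|²` and
`P` the Pfaffian, `det(1−F) = 1+s ↔ P = 0`, and `det(1−F) = (1+s/2)²` iff `F`
is self-dual or anti-self-dual. -/
theorem det_one_sub_antisymm_four_equality_cases (F : Matrix (Fin 4) (Fin 4) ℝ)
    (hF : Fᵀ = -F) :
    ((1 - F).det =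
        1 + (F 0 1 ^ 2 + F 0 2 ^ 2 + F 0 3 ^ 2 + F 1 2 ^ 2 + F 1 3 ^ 2 + F 2 3 ^ 2) ↔
      F 0 1 * F 2 3 - F 0 2 * F 1 3 + F 0 3 * F 1 2 = 0) ∧
    ((1 - F).det =
        (1 + (F 0 1 ^ 2 + F 0 2 ^ 2 + F 0 3 ^ 2 + F 1 2 ^ 2 + F 1 3 ^ 2 + F 2 3 ^ 2) / 2) ^ 2 ↔
      ((F 2 3, -(F 1 3), F 1 2) = (F 0 1, F 0 2, F 0 3) ∨
        (F 2 3, -(F 1 3), F 1 2) = -(F 0 1, F 0 2, F 0 3))) := by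
  rw [det_one_sub_of_transpose_eq_neg_fin_four hF]
  refine ⟨?_, one_add_sum_sq_add_sq_pfaffian_eq_sq_iff _ _ _ _ _ _⟩
  rw [add_eq_left]
  exact pow_eq_zero_iff two_ne_zero
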